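/- Let X be a δ-hyperbolic geodesic metric space, let f ∈ Isom(X) be a hyperbolic isometry with attracting and repelling fixed points A_+ and A_- in ∂X, fix disjoint neighborhoods U_+ and U_- of A_+ and A_- in X̄, and fix x ∈ X ∩ U_+. For g ∈ Isom(X) and m ≥ 0 let α_m be a geodesic from x to f^m g x. Then there exist ε ≥ 0 and M_1 ≥ 0, depending only on δ, f, x, U_+ and U_-, such that for every g ∈ Isom(X) with g U_+ ∩ U_- = ∅ and every m ≥ M_1, the concatenation α_m · (f^m g α_m), a path from x to (f^m g)^2 x, is a (1,ε)-quasi-geodesic. -/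

import Mathlib

/-!
Write `F = f^m g`. The concatenation of the geodesics `[x, Fx]` and `[Fx, F²x]` is a
`(1, 2B + 4δ)`-quasi-geodesic as soon as `(x · F²x)_{Fx} = (F⁻¹x · Fx)_x ≤ B`, so it suffices
to bound `(F⁻¹x · Fx)_w` for all admissible `g` and all large `m`. Suppose instead that it
tends to infinity along `g_r, m_r`. The products `(g_r x · f^{-m_r} x)_w` stay bounded, for
otherwise `g_r x → A₋`, whereas `g_r x ∈ g_r U₊` avoids `U₋`. Translating by `f^{m_r}` gives
`(F_r x · f^{m_r} x)_w → ∞` with `f^{m_r} x → A₊`, hence `(F_r⁻¹ x · f^{m_r} x)_w → ∞` too.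
So eventually `F_r⁻¹ x ∈ U₊`, while `g_r F_r⁻¹ x = f^{-m_r} x ∈ U₋`, contradicting
`g_r U₊ ∩ U₋ = ∅`.
-/

open Filter Metric Set

noncomputable section

universe u

variable {X : Type u} [MetricSpace X]

/-- The Gromov product `(x·y)_w = ½(d(x,w) + d(w,y) − d(x,y))`. -/
def gromovProduct (w x y : X) : ℝ := (dist x w + dist w y - dist x y) / 2

/-- `γ` is a geodesic from `x` to `y`, parametrized by arc length on `[0, dist x y]`. -/
structure IsGeodesicSegment (γ : ℝ → X) (x y : X) : Prop where
  source : γ 0 = x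
  target : γ (dist x y) = y
  isom : ∀ ⦃s t : ℝ⦄, s ∈ Set.Icc (0 : ℝ) (dist x y) → t ∈ Set.Icc (0 : ℝ) (dist x y) →
    dist (γ s) (γ t) = |s - t|

/-- A geodesic metric space is `δ`-hyperbolic: every pair of points is joined by a
geodesic, every geodesic triangle is `δ`-slim, every geodesic triangle has insize at
most `δ`, and the Gromov product is `δ`-hyperbolic. -/
structure IsDeltaHyperbolic (X : Type u) [MetricSpace X] (δ : ℝ) : Prop where
  delta_nonneg : 0 ≤ δ
  geodesic : ∀ x y : X, ∃ γ : ℝ → X, IsGeodesicSegment γ x y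
  slim : ∀ (x y z : X) (α β γ : ℝ → X),
    IsGeodesicSegment α y z → IsGeodesicSegment β z x → IsGeodesicSegment γ x y →
    ∀ s ∈ Set.Icc (0 : ℝ) (dist y z),
      (∃ t ∈ Set.Icc (0 : ℝ) (dist z x), dist (α s) (β t) ≤ δ) ∨
      (∃ t ∈ Set.Icc (0 : ℝ) (dist x y), dist (α s) (γ t) ≤ δ)
  insize : ∀ (x y z : X) (α β γ : ℝ → X),
    IsGeodesicSegment α y z → IsGeodesicSegment β z x → IsGeodesicSegment γ x y →
    dist (α (gromovProduct y x z)) (β (gromovProduct z x y)) ≤ δ ∧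
    dist (β (gromovProduct z x y)) (γ (gromovProduct x y z)) ≤ δ ∧
    dist (γ (gromovProduct x y z)) (α (gromovProduct y x z)) ≤ δ
  gromov : ∀ w x y z : X,
    min (gromovProduct w x y) (gromovProduct w y z) - δ ≤ gromovProduct w x z

/-- An isometry `f` of `X` is hyperbolic if for every `x ∈ X` there is `t > 0` with
`t|m − n| ≤ d(f^m x, f^n x)` for all integers `m, n`. -/
def IsHyperbolicIsometry (f : X ≃ᵢ X) : Prop :=
  ∀ x : X, ∃ t : ℝ, 0 < t ∧
    ∀ m n : ℤ, t * |(m : ℝ) - (n : ℝ)| ≤ dist ((f ^ m) x) ((f ^ n) x)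

/-- A sequence converges to infinity if the Gromov products `(x_i·x_j)_w → ∞`. -/
def ConvergesToInfinity (w : X) (u : ℕ → X) : Prop :=
  Tendsto (fun p : ℕ × ℕ => gromovProduct w (u p.1) (u p.2)) atTop atTop

/-- Two sequences are equivalent if the mixed Gromov products tend to infinity. -/
def SeqEquiv (w : X) (u v : ℕ → X) : Prop :=
  Tendsto (fun p : ℕ × ℕ => gromovProduct w (u p.1) (v p.2)) atTop atTop

/-- Sequences converging to infinity. -/
def BoundarySeq (w : X) : Type u := {u : ℕ → X // ConvergesToInfinity w u}

/-- The Gromov boundary `∂X`: equivalence classes of sequences converging to infinity. -/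
def GromovBoundary (w : X) : Type u :=
  Quot (fun u v : BoundarySeq w => SeqEquiv w u.1 v.1)

/-- The boundary point determined by a sequence converging to infinity. -/
def boundaryPt (w : X) (u : BoundarySeq w) : GromovBoundary w := Quot.mk _ u

/-- `X̄ = X ∪ ∂X`. -/
def GromovClosure (w : X) : Type u := X ⊕ GromovBoundary w

theorem gromovProduct_basepoint_ge (w w' x y : X) :
    gromovProduct w x y - dist w w' ≤ gromovProduct w' x y := by
  have h1 : |dist w' x - dist w x| ≤ dist w' w := abs_dist_sub_le w' w x
  have h2 : |dist w' y - dist w y| ≤ dist w' w := abs_dist_sub_le w' w y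
  rw [abs_le] at h1 h2
  unfold gromovProduct
  rw [dist_comm x w', dist_comm x w, dist_comm w w']
  linarith [h1.1, h1.2, h2.1, h2.2]

theorem gromovProduct_isometry (f : X ≃ᵢ X) (w x y : X) :
    gromovProduct w (f x) (f y) = gromovProduct (f.symm w) x y := by
  unfold gromovProduct
  conv_lhs => rw [show w = f (f.symm w) from (f.apply_symm_apply w).symm]
  rw [f.dist_eq, f.dist_eq, f.dist_eq]

theorem convergesToInfinity_isometry {w : X} (f : X ≃ᵢ X) {u : ℕ → X}
    (h : ConvergesToInfinity w u) :
    ConvergesToInfinity w (fun n => f (u n)) := by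
  refine tendsto_atTop_mono (fun p => ?_)
    (tendsto_atTop_add_const_right atTop (-dist w (f.symm w)) h)
  have h1 := gromovProduct_basepoint_ge w (f.symm w) (u p.1) (u p.2)
  have h2 := gromovProduct_isometry f w (u p.1) (u p.2)
  dsimp only
  linarith

theorem seqEquiv_isometry {w : X} (f : X ≃ᵢ X) {u v : ℕ → X}
    (h : SeqEquiv w u v) :
    SeqEquiv w (fun n => f (u n)) (fun n => f (v n)) := by
  refine tendsto_atTop_mono (fun p => ?_)
    (tendsto_atTop_add_const_right atTop (-dist w (f.symm w)) h)
  have h1 := gromovProduct_basepoint_ge w (f.symm w) (u p.1) (v p.2)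
  have h2 := gromovProduct_isometry f w (u p.1) (v p.2)
  dsimp only
  linarith

/-- The extension of an isometry of `X` to the Gromov boundary. -/
def boundaryMap (w : X) (f : X ≃ᵢ X) : GromovBoundary w → GromovBoundary w :=
  Quot.lift
    (fun u : BoundarySeq w =>
      boundaryPt w ⟨fun n => f (u.1 n), convergesToInfinity_isometry f u.2⟩)
    (fun _ _ h => Quot.sound (seqEquiv_isometry f h))

/-- The extension of an isometry of `X` to `X̄ = X ∪ ∂X`. -/
def closureMap (w : X) (f : X ≃ᵢ X) : GromovClosure w → GromovClosure w
  | Sum.inl x => Sum.inl (f x)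
  | Sum.inr a => Sum.inr (boundaryMap w f a)

/-- The Gromov product of a boundary point with a point of `X̄`, extended by
taking infima of liminfs over representative sequences. -/
noncomputable def boundaryGP (w : X) (a : GromovBoundary w) : GromovClosure w → ℝ
  | Sum.inl p => sInf {r : ℝ | ∃ u : BoundarySeq w, boundaryPt w u = a ∧
      r = Filter.liminf (fun n => gromovProduct w (u.1 n) p) atTop}
  | Sum.inr b => sInf {r : ℝ | ∃ u v : BoundarySeq w, boundaryPt w u = a ∧
      boundaryPt w v = b ∧
      r = Filter.liminf (fun n => gromovProduct w (u.1 n) (v.1 n)) atTop}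

/-- The basis for the topology on `X̄`: open balls in `X`, and the sets
`N(â,k) = {y : (â·y)_w > k}` for boundary points `â` and `k > 0`. -/
def closureBasis (w : X) : Set (Set (GromovClosure w)) :=
  {S | (∃ (x : X) (r : ℝ), 0 < r ∧ S = Sum.inl '' Metric.ball x r) ∨
       (∃ (a : GromovBoundary w) (k : ℝ), 0 < k ∧ S = {y | k < boundaryGP w a y})}

/-- The topology on `X̄` generated by the basis above. -/
def closureTop (w : X) : TopologicalSpace (GromovClosure w) :=
  TopologicalSpace.generateFrom (closureBasis w)

/-- `S ⊆ X̄` is a neighborhood of `p ∈ X̄`. -/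
def IsNeighborhood (w : X) (S : Set (GromovClosure w)) (p : GromovClosure w) : Prop :=
  S ∈ @nhds (GromovClosure w) (closureTop w) p

/-- `a ∈ ∂X` is the attracting fixed point of `f`: it is represented by the
sequence `(f^n x)` for a point `x ∈ X`. -/
def IsAttractingFixedPt (w : X) (f : X ≃ᵢ X) (a : GromovBoundary w) : Prop :=
  ∃ (x : X) (h : ConvergesToInfinity w (fun n : ℕ => (f ^ (n : ℤ)) x)),
    boundaryPt w ⟨fun n : ℕ => (f ^ (n : ℤ)) x, h⟩ = a

/-- `a ∈ ∂X` is the repelling fixed point of `f`: the attracting fixed point of `f⁻¹`. -/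
def IsRepellingFixedPt (w : X) (f : X ≃ᵢ X) (a : GromovBoundary w) : Prop :=
  IsAttractingFixedPt w f⁻¹ a

/-- The concatenation `α · (f α)` of a path `α` defined on `[0, L]` with its
image under `f`, parametrized on `[0, 2L]`. -/
noncomputable def concatPath (f : X ≃ᵢ X) (α : ℝ → X) (L : ℝ) : ℝ → X :=
  fun s => if s ≤ L then α s else f (α (s - L))

def IsGromovHyperbolicAt (w : X) (δ : ℝ) : Prop :=
  ∀ x y z : X, min (gromovProduct w x y) (gromovProduct w y z) - δ ≤ gromovProduct w x z

section GromovProduct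

variable {w : X}

theorem IsGromovHyperbolicAt.nonneg {δ : ℝ} (hδ : IsGromovHyperbolicAt w δ) : 0 ≤ δ := by
  simpa using hδ w w w

theorem gromovProduct_nonneg (p q : X) : 0 ≤ gromovProduct w p q := by
  unfold gromovProduct; linarith [dist_triangle p w q]

theorem gromovProduct_le_dist_left (p q : X) : gromovProduct w p q ≤ dist p w := by
  unfold gromovProduct; linarith [dist_triangle w p q, dist_comm w p]

theorem gromovProduct_le_dist_right (p q : X) : gromovProduct w p q ≤ dist w q := by
  unfold gromovProduct; linarith [dist_triangle p q w, dist_comm q w]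

theorem gromovProduct_comm (p q : X) : gromovProduct w p q = gromovProduct w q p := by
  unfold gromovProduct; rw [dist_comm p w, dist_comm w q, dist_comm p q]; ring

theorem gromovProduct_self (p : X) : gromovProduct w p p = dist p w := by
  unfold gromovProduct; rw [dist_self, dist_comm w p]; ring

theorem gromovProduct_sub_dist_le (p p' q : X) :
    gromovProduct w p' q - dist p p' ≤ gromovProduct w p q := by
  unfold gromovProduct; linarith [dist_triangle p' p w, dist_triangle p p' q, dist_comm p p']

theorem dist_eq_sub_gromovProduct (p q : X) :
    dist p q = dist p w + dist w q - 2 * gromovProduct w p q := by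
  unfold gromovProduct; ring

end GromovProduct

theorem gromovProduct_add_gromovProduct (u a x : X) :
    gromovProduct u a x + gromovProduct x a u = dist u x := by
  unfold gromovProduct; rw [dist_comm x u]; ring

theorem gromovProduct_apply_self_apply_apply (F : X ≃ᵢ X) (x : X) :
    gromovProduct (F x) x (F (F x)) = gromovProduct x (F⁻¹ x) (F x) := by
  simpa using gromovProduct_isometry F (F x) (F⁻¹ x) (F x)

theorem sub_gromovProduct_le_gromovProduct_apply_apply (h : X ≃ᵢ X) (w a x : X) :
    dist x (h⁻¹ x) - gromovProduct w a (h⁻¹ x) - 2 * dist x w ≤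
      gromovProduct w (h a) (h x) := by
  have hmove : gromovProduct x (h a) (h x) = gromovProduct (h⁻¹ x) a x :=
    gromovProduct_isometry h x a x
  linarith [gromovProduct_add_gromovProduct (h⁻¹ x) a x, dist_comm (h⁻¹ x) x, dist_comm w x,
    gromovProduct_basepoint_ge x w (h a) (h x), gromovProduct_basepoint_ge x w a (h⁻¹ x)]

section Sequences

variable {w : X} {δ : ℝ} {α : Type*}

theorem tendsto_gromovProduct_trans (hδ : IsGromovHyperbolicAt w δ) {l : Filter α}
    {a b c : α → X} (hab : Tendsto (fun r => gromovProduct w (a r) (b r)) l atTop)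
    (hbc : Tendsto (fun r => gromovProduct w (b r) (c r)) l atTop) :
    Tendsto (fun r => gromovProduct w (a r) (c r)) l atTop := by
  refine tendsto_atTop.2 fun C => ?_
  filter_upwards [tendsto_atTop.1 hab (C + δ), tendsto_atTop.1 hbc (C + δ)] with r h₁ h₂
  linarith [hδ (a r) (b r) (c r), le_min h₁ h₂]

theorem tendsto_fst_atTop_nat : Tendsto (Prod.fst : ℕ × ℕ → ℕ) atTop atTop :=
  tendsto_atTop_atTop_of_monotone monotone_fst fun b => ⟨(b, 0), le_rfl⟩

theorem tendsto_snd_atTop_nat : Tendsto (Prod.snd : ℕ × ℕ → ℕ) atTop atTop :=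
  tendsto_atTop_atTop_of_monotone monotone_snd fun b => ⟨(0, b), le_rfl⟩

theorem SeqEquiv.tendsto_comp {u v : ℕ → X} (h : SeqEquiv w u v) {l : Filter α}
    {i j : α → ℕ} (hi : Tendsto i l atTop) (hj : Tendsto j l atTop) :
    Tendsto (fun r => gromovProduct w (u (i r)) (v (j r))) l atTop := by
  have hij : Tendsto (fun r => (i r, j r)) l (atTop ×ˢ atTop) := hi.prodMk hj
  rw [prod_atTop_atTop_eq] at hij
  unfold SeqEquiv at h
  exact h.comp hij

theorem SeqEquiv.symm {u v : ℕ → X} (h : SeqEquiv w u v) : SeqEquiv w v u :=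
  (h.tendsto_comp tendsto_snd_atTop_nat tendsto_fst_atTop_nat).congr fun _ =>
    gromovProduct_comm _ _

theorem SeqEquiv.trans (hδ : IsGromovHyperbolicAt w δ) {u v z : ℕ → X} (huv : SeqEquiv w u v)
    (hvz : SeqEquiv w v z) : SeqEquiv w u z :=
  have hmax : Tendsto (fun p : ℕ × ℕ => max p.1 p.2) atTop atTop :=
    tendsto_atTop_mono (fun _ => le_max_left _ _) tendsto_fst_atTop_nat
  tendsto_gromovProduct_trans hδ (huv.tendsto_comp tendsto_fst_atTop_nat hmax)
    (hvz.tendsto_comp hmax tendsto_snd_atTop_nat)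

theorem ConvergesToInfinity.tendsto_comp {u : ℕ → X} (h : ConvergesToInfinity w u)
    {l : Filter α} {i j : α → ℕ} (hi : Tendsto i l atTop) (hj : Tendsto j l atTop) :
    Tendsto (fun r => gromovProduct w (u (i r)) (u (j r))) l atTop :=
  SeqEquiv.tendsto_comp h hi hj

theorem seqEquiv_of_tendsto_comp (hδ : IsGromovHyperbolicAt w δ) {u v : ℕ → X}
    (hv : ConvergesToInfinity w v) {k : ℕ → ℕ} (hk : Tendsto k atTop atTop)
    (h : Tendsto (fun r => gromovProduct w (u r) (v (k r))) atTop atTop) : SeqEquiv w u v :=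
  tendsto_gromovProduct_trans hδ (h.comp tendsto_fst_atTop_nat)
    (hv.tendsto_comp (hk.comp tendsto_fst_atTop_nat) tendsto_snd_atTop_nat)

theorem ConvergesToInfinity.tendsto_dist {u : ℕ → X} (hu : ConvergesToInfinity w u) (x : X) :
    Tendsto (fun n => dist x (u n)) atTop atTop := by
  refine tendsto_atTop_mono (fun n => ?_) (tendsto_atTop_add_const_right _ (-dist x w)
    (hu.tendsto_comp tendsto_id tendsto_id))
  simp only [id, gromovProduct_self]
  linarith [dist_triangle (u n) x w, dist_comm x (u n)]

theorem boundaryPt_eq_iff (hδ : IsGromovHyperbolicAt w δ) {u v : BoundarySeq w} :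
    boundaryPt w u = boundaryPt w v ↔ SeqEquiv w u.1 v.1 :=
  have hequiv : Equivalence fun u v : BoundarySeq w => SeqEquiv w u.1 v.1 :=
    ⟨fun u => u.2, SeqEquiv.symm, fun huv hvz => huv.trans hδ hvz⟩
  ⟨fun h => hequiv.eqvGen_iff.1 (Quot.eqvGen_exact h), fun h => Quot.sound h⟩

end Sequences

def TendsToBoundary (w : X) (u : ℕ → X) (A : GromovBoundary w) : Prop :=
  ∃ v : BoundarySeq w, boundaryPt w v = A ∧ SeqEquiv w u v.1

namespace TendsToBoundary

variable {w : X} {δ : ℝ} {u : ℕ → X} {A : GromovBoundary w}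

theorem of_seqEquiv (hδ : IsGromovHyperbolicAt w δ) {v : ℕ → X} (hv : TendsToBoundary w v A)
    (huv : SeqEquiv w u v) : TendsToBoundary w u A :=
  let ⟨z, hz, hvz⟩ := hv
  ⟨z, hz, huv.trans hδ hvz⟩

theorem convergesToInfinity (hδ : IsGromovHyperbolicAt w δ) (hu : TendsToBoundary w u A) :
    ConvergesToInfinity w u :=
  let ⟨_, _, h⟩ := hu
  h.trans hδ h.symm

theorem boundaryPt_eq (hδ : IsGromovHyperbolicAt w δ) (hu : TendsToBoundary w u A) :
    boundaryPt w ⟨u, hu.convergesToInfinity hδ⟩ = A := by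
  have hv := hu.choose_spec
  refine Eq.trans ?_ hv.1
  exact (boundaryPt_eq_iff hδ).2 hv.2

end TendsToBoundary

section BoundaryNeighborhoods

variable {w : X} {δ : ℝ}

theorem boundaryGP_le_liminf (hδ : IsGromovHyperbolicAt w δ) {u v : ℕ → X}
    {a A : GromovBoundary w} (hu : TendsToBoundary w u a) (hv : TendsToBoundary w v A) :
    boundaryGP w a (Sum.inr A) ≤ liminf (fun n => gromovProduct w (u n) (v n)) atTop := by
  refine csInf_le ⟨0, ?_⟩ ⟨_, _, hu.boundaryPt_eq hδ, hv.boundaryPt_eq hδ, rfl⟩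
  rintro _ ⟨u', v', -, -, rfl⟩
  rw [liminf_eq]
  exact Real.sSup_nonneg' ⟨0, Eventually.of_forall fun _ => gromovProduct_nonneg _ _, le_rfl⟩

theorem exists_gromovProduct_lt_of_boundaryGP_lt (hδ : IsGromovHyperbolicAt w δ)
    {a : GromovBoundary w} {v : BoundarySeq w} (hv : boundaryPt w v = a) {p : X} {c : ℝ}
    (h : boundaryGP w a (Sum.inl p) < c) (r : ℝ) :
    ∃ y, gromovProduct w y p < c ∧ ∀ᶠ q in atTop, r ≤ gromovProduct w y (v.1 q) := by
  unfold boundaryGP at h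
  obtain ⟨_, ⟨u, hu, rfl⟩, hlt⟩ := exists_lt_of_csInf_lt (by exact ⟨_, v, hv, rfl⟩) h
  have hfreq : ∃ᶠ n in atTop, gromovProduct w (u.1 n) p < c :=
    frequently_lt_of_liminf_lt (isBoundedUnder_of
      ⟨dist w p, fun _ => gromovProduct_le_dist_right _ _⟩).isCoboundedUnder_flip hlt
  have huv := (boundaryPt_eq_iff hδ).1 (hu.trans hv.symm)
  obtain ⟨N, hN⟩ := eventually_atTop.1 (tendsto_atTop.1 huv r)
  obtain ⟨j, hj, hjc⟩ := frequently_atTop.1 hfreq N.1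
  exact ⟨u.1 j, hjc, eventually_atTop.2 ⟨N.2, fun q hq => hN (j, q) ⟨hj, hq⟩⟩⟩

theorem boundaryGP_le_of_frequently_lt (hδ : IsGromovHyperbolicAt w δ) {u : ℕ → X}
    {a A : GromovBoundary w} (hu : TendsToBoundary w u A) {c : ℝ}
    (h : ∃ᶠ n in atTop, boundaryGP w a (Sum.inl (u n)) < c) :
    boundaryGP w a (Sum.inr A) ≤ c := by
  -- Diagonal argument: build `y r → a` and `u (n r) → A` with `(y r · u (n r))_w < c`.
  obtain ⟨v, hv⟩ := Quot.exists_rep a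
  choose n hn hnc using fun r : ℕ => frequently_atTop.1 h r
  choose y hyc hy using fun r : ℕ => exists_gromovProduct_lt_of_boundaryGP_lt hδ hv (hnc r) r
  choose k hky hk using fun r : ℕ => ((hy r).and (eventually_ge_atTop r)).exists
  have htn : Tendsto n atTop atTop := tendsto_atTop_mono hn tendsto_id
  have hya : TendsToBoundary w y a := TendsToBoundary.of_seqEquiv hδ ⟨v, hv, v.2⟩
    (seqEquiv_of_tendsto_comp hδ v.2 (tendsto_atTop_mono hk tendsto_id)
      (tendsto_atTop_mono hky tendsto_natCast_atTop_atTop))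
  have hun : TendsToBoundary w (u ∘ n) A := hu.of_seqEquiv hδ
    (seqEquiv_of_tendsto_comp hδ (hu.convergesToInfinity hδ) htn
      ((hu.convergesToInfinity hδ).tendsto_comp htn htn))
  calc boundaryGP w a (Sum.inr A)
      ≤ liminf (fun r => gromovProduct w (y r) (u (n r))) atTop :=
        boundaryGP_le_liminf hδ hya hun
    _ ≤ c := liminf_le_of_frequently_le (Frequently.of_forall fun r => (hyc r).le)
        (isBoundedUnder_of ⟨0, fun _ => gromovProduct_nonneg _ _⟩)

theorem TendsToBoundary.eventually_lt_boundaryGP (hδ : IsGromovHyperbolicAt w δ) {u : ℕ → X}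
    {a A : GromovBoundary w} (hu : TendsToBoundary w u A) {k : ℝ}
    (hk : k < boundaryGP w a (Sum.inr A)) :
    ∀ᶠ n in atTop, k < boundaryGP w a (Sum.inl (u n)) := by
  by_contra hcon
  have hfreq : ∃ᶠ n in atTop,
      boundaryGP w a (Sum.inl (u n)) < (k + boundaryGP w a (Sum.inr A)) / 2 :=
    (not_eventually.1 hcon).mono fun n hn => by linarith [not_lt.1 hn]
  linarith [boundaryGP_le_of_frequently_lt hδ hu hfreq]

theorem TendsToBoundary.eventually_mem (hδ : IsGromovHyperbolicAt w δ) {u : ℕ → X}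
    {A : GromovBoundary w} (hu : TendsToBoundary w u A) {U : Set (GromovClosure w)}
    (hU : IsNeighborhood w U (Sum.inr A)) :
    ∀ᶠ n in atTop, (Sum.inl (u n) : GromovClosure w) ∈ U := by
  let := closureTop w
  obtain ⟨_, ⟨S, ⟨hSfin, hSB⟩, rfl⟩, hAS, hSU⟩ :=
    (TopologicalSpace.isTopologicalBasis_of_subbasis rfl).mem_nhds_iff.1 hU
  have hS : ∀ t ∈ S, ∀ᶠ n in atTop, (Sum.inl (u n) : GromovClosure w) ∈ t := by
    intro t ht
    rcases hSB ht with ⟨y, r, -, rfl⟩ | ⟨a, k, -, rfl⟩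
    · obtain ⟨_, -, h⟩ := hAS _ ht
      exact absurd h Sum.inl_ne_inr
    · exact hu.eventually_lt_boundaryGP hδ (hAS _ ht)
  filter_upwards [(eventually_all_finite hSfin).2 hS] with n hn using hSU (mem_sInter.2 hn)

end BoundaryNeighborhoods

section FixedPoints

variable {w : X} {δ : ℝ}

theorem IsAttractingFixedPt.tendsToBoundary (hδ : IsGromovHyperbolicAt w δ) {F : X ≃ᵢ X}
    {A : GromovBoundary w} (hA : IsAttractingFixedPt w F A) (x : X) :
    TendsToBoundary w (fun n : ℕ => (F ^ n) x) A := by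
  obtain ⟨x₀, h₀, rfl⟩ := hA
  refine ⟨_, rfl, seqEquiv_of_tendsto_comp hδ h₀ tendsto_id ?_⟩
  refine tendsto_atTop_mono (fun n => ?_) (tendsto_atTop_add_const_right _ (-dist x x₀)
    (h₀.tendsto_comp tendsto_id tendsto_id))
  have := gromovProduct_sub_dist_le (w := w) ((F ^ n) x) ((F ^ n) x₀) ((F ^ n) x₀)
  simp only [id, zpow_natCast, (F ^ n).dist_eq] at this ⊢
  linarith

theorem IsRepellingFixedPt.tendsToBoundary (hδ : IsGromovHyperbolicAt w δ) {F : X ≃ᵢ X}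
    {A : GromovBoundary w} (hA : IsRepellingFixedPt w F A) (x : X) :
    TendsToBoundary w (fun n : ℕ => (F ^ n)⁻¹ x) A := by
  simpa only [inv_pow] using IsAttractingFixedPt.tendsToBoundary hδ hA x

theorem notMem_of_closureMap_image_inter_eq_empty {g : X ≃ᵢ X} {U V : Set (GromovClosure w)}
    (hg : closureMap w g '' U ∩ V = ∅) {y : X} (hy : Sum.inl y ∈ U) : Sum.inl (g y) ∉ V :=
  fun hV => eq_empty_iff_forall_notMem.1 hg _ ⟨⟨_, hy, rfl⟩, hV⟩

theorem exists_forall_le_of_forall_not_tendsto {ι : Type*} (P : ι → Prop)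
    (Q : ι → ℕ → ℝ) (h : ∀ (g : ℕ → ι) (m : ℕ → ℕ), (∀ r, P (g r)) → Tendsto m atTop atTop →
      ¬ Tendsto (fun r => Q (g r) (m r)) atTop atTop) :
    ∃ D : ℝ, ∃ M : ℕ, ∀ g, P g → ∀ m, M ≤ m → Q g m ≤ D := by
  by_contra! hcon
  choose g hg m hm hQ using fun r : ℕ => hcon r r
  exact h g m hg (tendsto_atTop_mono hm tendsto_id)
    (tendsto_atTop_mono (fun r => (hQ r).le) tendsto_natCast_atTop_atTop)

variable {f : X ≃ᵢ X} {Aplus Aminus : GromovBoundary w} {Uplus Uminus : Set (GromovClosure w)}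
  {x : X}

theorem exists_forall_gromovProduct_apply_le (hδ : IsGromovHyperbolicAt w δ)
    (hAm : IsRepellingFixedPt w f Aminus) (hUm : IsNeighborhood w Uminus (Sum.inr Aminus))
    (hx : Sum.inl x ∈ Uplus) :
    ∃ D : ℝ, ∃ M : ℕ, ∀ g : X ≃ᵢ X, closureMap w g '' Uplus ∩ Uminus = ∅ →
      ∀ m, M ≤ m → gromovProduct w (g x) ((f ^ m)⁻¹ x) ≤ D := by
  refine exists_forall_le_of_forall_not_tendsto _ _ fun g m hg hm hQ => ?_
  have hum := hAm.tendsToBoundary hδ x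
  have hgx : TendsToBoundary w (fun r => g r x) Aminus :=
    hum.of_seqEquiv hδ (seqEquiv_of_tendsto_comp hδ (hum.convergesToInfinity hδ) hm hQ)
  obtain ⟨r, hr⟩ := (hgx.eventually_mem hδ hUm).exists
  exact notMem_of_closureMap_image_inter_eq_empty (hg r) hx hr

theorem exists_forall_gromovProduct_inv_apply_apply_le (hδ : IsGromovHyperbolicAt w δ)
    (hAp : IsAttractingFixedPt w f Aplus) (hAm : IsRepellingFixedPt w f Aminus)
    (hUp : IsNeighborhood w Uplus (Sum.inr Aplus))
    (hUm : IsNeighborhood w Uminus (Sum.inr Aminus)) (hx : Sum.inl x ∈ Uplus) :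
    ∃ C : ℝ, ∃ M : ℕ, ∀ g : X ≃ᵢ X, closureMap w g '' Uplus ∩ Uminus = ∅ →
      ∀ m, M ≤ m → gromovProduct w ((f ^ m * g)⁻¹ x) ((f ^ m * g) x) ≤ C := by
  obtain ⟨D, M, hD⟩ := exists_forall_gromovProduct_apply_le hδ hAm hUm hx
  have hup := hAp.tendsToBoundary hδ x
  have hum := hAm.tendsToBoundary hδ x
  refine exists_forall_le_of_forall_not_tendsto _ _ fun g m hg hm hQ => ?_
  have hshadow : Tendsto (fun r => gromovProduct w ((f ^ m r * g r) x) ((f ^ m r) x))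
      atTop atTop := by
    refine tendsto_atTop_mono' _ ?_ (tendsto_atTop_add_const_right _ (-(D + 2 * dist x w))
      (((hum.convergesToInfinity hδ).tendsto_dist x).comp hm))
    filter_upwards [hm.eventually_ge_atTop M] with r hr
    have := sub_gromovProduct_le_gromovProduct_apply_apply (f ^ m r) w (g r x) x
    have := hD _ (hg r) _ hr
    simp only [Function.comp_apply, IsometryEquiv.mul_apply]
    linarith
  have hps : TendsToBoundary w (fun r => (f ^ m r * g r)⁻¹ x) Aplus :=
    hup.of_seqEquiv hδ (seqEquiv_of_tendsto_comp hδ (hup.convergesToInfinity hδ) hm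
      (tendsto_gromovProduct_trans hδ hQ hshadow))
  obtain ⟨r, hrp, hrm⟩ :=
    ((hps.eventually_mem hδ hUp).and (hm.eventually (hum.eventually_mem hδ hUm))).exists
  refine notMem_of_closureMap_image_inter_eq_empty (hg r) hrp ?_
  simpa [mul_inv_rev] using hrm

end FixedPoints

section Concatenation

variable {δ : ℝ}

theorem gromovProduct_le_of_dist_add_dist_eq {x y z p q : X} (hδ : IsGromovHyperbolicAt y δ)
    (hp : dist x p + dist p y = dist x y) (hq : dist y q + dist q z = dist y z) :
    gromovProduct y p q ≤ gromovProduct y x z + 2 * δ := by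
  have hxp : gromovProduct y x p = dist p y := by unfold gromovProduct; linarith [dist_comm y p]
  have hqz : gromovProduct y q z = dist y q := by unfold gromovProduct; linarith [dist_comm q y]
  have hxq : gromovProduct y p q - δ ≤ gromovProduct y x q := by
    have := hδ x p q
    rwa [hxp, min_eq_right (gromovProduct_le_dist_left p q)] at this
  have hmin : gromovProduct y p q - δ ≤ min (gromovProduct y x q) (gromovProduct y q z) :=
    le_min hxq (by rw [hqz]; linarith [gromovProduct_le_dist_right (w := y) p q, hδ.nonneg])
  linarith [hδ x q z]

theorem IsGeodesicSegment.dist_source_apply {γ : ℝ → X} {x y : X}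
    (hγ : IsGeodesicSegment γ x y) {s : ℝ} (hs : s ∈ Icc 0 (dist x y)) : dist x (γ s) = s := by
  have := hγ.isom (left_mem_Icc.2 dist_nonneg) hs
  rwa [hγ.source, zero_sub, abs_neg, abs_of_nonneg hs.1] at this

theorem IsGeodesicSegment.dist_apply_target {γ : ℝ → X} {x y : X}
    (hγ : IsGeodesicSegment γ x y) {s : ℝ} (hs : s ∈ Icc 0 (dist x y)) :
    dist (γ s) y = dist x y - s := by
  have := hγ.isom hs (right_mem_Icc.2 dist_nonneg)
  rwa [hγ.target, abs_of_nonpos (by linarith [hs.2]), neg_sub] at this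

theorem IsGeodesicSegment.gromovProduct_apply_apply_le {F : X ≃ᵢ X} {α : ℝ → X} {x : X}
    (hδ : IsGromovHyperbolicAt (F x) δ) (hα : IsGeodesicSegment α x (F x)) {s r : ℝ}
    (hs : s ∈ Icc 0 (dist x (F x))) (hr : r ∈ Icc 0 (dist x (F x))) :
    gromovProduct (F x) (α s) (F (α r)) ≤ gromovProduct (F x) x (F (F x)) + 2 * δ := by
  refine gromovProduct_le_of_dist_add_dist_eq hδ ?_ ?_
  · rw [hα.dist_source_apply hs, hα.dist_apply_target hs]; ring
  · rw [F.dist_eq, F.dist_eq, F.dist_eq, hα.dist_source_apply hr, hα.dist_apply_target hr]; ring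

theorem concatPath_dist_bounds {F : X ≃ᵢ X} {α : ℝ → X} {x : X}
    (hδ : IsGromovHyperbolicAt (F x) δ) (hα : IsGeodesicSegment α x (F x)) {B : ℝ}
    (hB : gromovProduct (F x) x (F (F x)) ≤ B) {s t : ℝ}
    (hs : s ∈ Icc 0 (2 * dist x (F x))) (ht : t ∈ Icc 0 (2 * dist x (F x))) :
    |s - t| - (2 * B + 4 * δ) ≤
        dist (concatPath F α (dist x (F x)) s) (concatPath F α (dist x (F x)) t) ∧
      dist (concatPath F α (dist x (F x)) s) (concatPath F α (dist x (F x)) t) ≤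
        |s - t| + (2 * B + 4 * δ) := by
  wlog hst : s ≤ t generalizing s t
  · rw [abs_sub_comm, dist_comm]; exact this ht hs (le_of_not_ge hst)
  set L := dist x (F x)
  have hε : 0 ≤ 2 * B + 4 * δ := by
    linarith [gromovProduct_nonneg (w := F x) x (F (F x)), hδ.nonneg]
  rw [abs_of_nonpos (sub_nonpos.2 hst), neg_sub]
  suffices h : t - s - (2 * B + 4 * δ) ≤
      dist (concatPath F α L s) (concatPath F α L t) ∧
      dist (concatPath F α L s) (concatPath F α L t) ≤ t - s from ⟨h.1, by linarith [h.2]⟩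
  rcases le_or_gt t L with htL | hLt
  · have hd := hα.isom ⟨hs.1, hst.trans htL⟩ ⟨hs.1.trans hst, htL⟩
    simp only [concatPath, if_pos htL, if_pos (hst.trans htL), hd,
      abs_of_nonpos (sub_nonpos.2 hst), neg_sub]
    constructor <;> linarith
  have htI : t - L ∈ Icc 0 L := ⟨by linarith, by linarith [ht.2]⟩
  rcases le_or_gt s L with hsL | hLs
  · have hsI : s ∈ Icc 0 L := ⟨hs.1, hsL⟩
    have hcorner := hα.gromovProduct_apply_apply_le hδ hsI htI
    have hd := dist_eq_sub_gromovProduct (w := F x) (α s) (F (α (t - L)))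
    rw [hα.dist_apply_target hsI, F.dist_eq, hα.dist_source_apply htI] at hd
    simp only [concatPath, if_pos hsL, if_neg (not_le.2 hLt)]
    constructor <;> linarith [gromovProduct_nonneg (w := F x) (α s) (F (α (t - L)))]
  · have hd := hα.isom (s := s - L) ⟨by linarith, by linarith [hs.2]⟩ htI
    simp only [concatPath, if_neg (not_le.2 hLs), if_neg (not_le.2 hLt), F.dist_eq, hd,
      abs_of_nonpos (by linarith : s - L - (t - L) ≤ 0)]
    constructor <;> linarith

end Concatenation

theorem concatenation_quasi_geodesic_general (δ : ℝ) (hX : IsDeltaHyperbolic X δ) (w : X)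
    (f : X ≃ᵢ X)
    (Aplus Aminus : GromovBoundary w)
    (hAp : IsAttractingFixedPt w f Aplus) (hAm : IsRepellingFixedPt w f Aminus)
    (Uplus Uminus : Set (GromovClosure w))
    (hUp : IsNeighborhood w Uplus (Sum.inr Aplus))
    (hUm : IsNeighborhood w Uminus (Sum.inr Aminus))
    (x : X) (hx : Sum.inl x ∈ Uplus) :
    ∃ ε : ℝ, 0 ≤ ε ∧ ∃ M1 : ℕ, ∀ g : X ≃ᵢ X,
      (closureMap w g '' Uplus) ∩ Uminus = ∅ →
      ∀ m : ℕ, M1 ≤ m →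
      ∀ α : ℝ → X, IsGeodesicSegment α x ((f ^ m * g) x) →
      ∀ s ∈ Set.Icc (0 : ℝ) (2 * dist x ((f ^ m * g) x)),
      ∀ t ∈ Set.Icc (0 : ℝ) (2 * dist x ((f ^ m * g) x)),
        |s - t| - ε ≤ dist (concatPath (f ^ m * g) α (dist x ((f ^ m * g) x)) s)
            (concatPath (f ^ m * g) α (dist x ((f ^ m * g) x)) t) ∧
        dist (concatPath (f ^ m * g) α (dist x ((f ^ m * g) x)) s)
            (concatPath (f ^ m * g) α (dist x ((f ^ m * g) x)) t) ≤ |s - t| + ε := by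
  obtain ⟨C, M, hC⟩ :=
    exists_forall_gromovProduct_inv_apply_apply_le (hX.gromov w) hAp hAm hUp hUm hx
  have hδ := hX.delta_nonneg
  refine ⟨2 * (max C 0 + dist x w) + 4 * δ, by positivity, M,
    fun g hg m hm α hα s hs t ht => ?_⟩
  refine concatPath_dist_bounds (hX.gromov _) hα ?_ hs ht
  calc gromovProduct ((f ^ m * g) x) x ((f ^ m * g) ((f ^ m * g) x))
      = gromovProduct x ((f ^ m * g)⁻¹ x) ((f ^ m * g) x) :=
        gromovProduct_apply_self_apply_apply _ x
    _ ≤ gromovProduct w ((f ^ m * g)⁻¹ x) ((f ^ m * g) x) + dist x w := by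
        linarith [gromovProduct_basepoint_ge x w ((f ^ m * g)⁻¹ x) ((f ^ m * g) x)]
    _ ≤ max C 0 + dist x w := by linarith [hC g hg m hm, le_max_left C 0]

/-- With `f`, `A₊`, `A₋`, `U₊`, `U₋` as before and `x ∈ X ∩ U₊`,
there are `ε ≥ 0` and `M₁ ≥ 0` depending only on `δ`, `f`, `x`, `U₊`, `U₋` such
that for every isometry `g` with `g U₊ ∩ U₋ = ∅`, every `m ≥ M₁` and every
geodesic `α` from `x` to `f^m g x`, the concatenation `α · (f^m g α)` (a path from
`x` to `(f^m g)² x` parametrized on `[0, 2L]` where `L = d(x, f^m g x)`) is a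
`(1,ε)`-quasi-geodesic. -/
theorem concatenation_quasi_geodesic (δ : ℝ) (hX : IsDeltaHyperbolic X δ) (w : X)
    (f : X ≃ᵢ X) (hf : IsHyperbolicIsometry f)
    (Aplus Aminus : GromovBoundary w)
    (hAp : IsAttractingFixedPt w f Aplus) (hAm : IsRepellingFixedPt w f Aminus)
    (Uplus Uminus : Set (GromovClosure w))
    (hUp : IsNeighborhood w Uplus (Sum.inr Aplus))
    (hUm : IsNeighborhood w Uminus (Sum.inr Aminus))
    (hdisj : Uplus ∩ Uminus = ∅)
    (x : X) (hx : Sum.inl x ∈ Uplus) :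
    ∃ ε : ℝ, 0 ≤ ε ∧ ∃ M1 : ℕ, ∀ g : X ≃ᵢ X,
      (closureMap w g '' Uplus) ∩ Uminus = ∅ →
      ∀ m : ℕ, M1 ≤ m →
      ∀ α : ℝ → X, IsGeodesicSegment α x ((f ^ m * g) x) →
      ∀ s ∈ Set.Icc (0 : ℝ) (2 * dist x ((f ^ m * g) x)),
      ∀ t ∈ Set.Icc (0 : ℝ) (2 * dist x ((f ^ m * g) x)),
        |s - t| - ε ≤ dist (concatPath (f ^ m * g) α (dist x ((f ^ m * g) x)) s)
            (concatPath (f ^ m * g) α (dist x ((f ^ m * g) x)) t) ∧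
        dist (concatPath (f ^ m * g) α (dist x ((f ^ m * g) x)) s)
            (concatPath (f ^ m * g) α (dist x ((f ^ m * g) x)) t) ≤ |s - t| + ε :=
  concatenation_quasi_geodesic_general δ hX w f Aplus Aminus hAp hAm Uplus Uminus hUp hUm x hx
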